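/- arXiv:2109.09155 — 4 statements merged into one kernel-verified Lean document; each statement's English description precedes it below -/
import Mathlib

section
/- Let f : {0,1}^n → {0,1} and suppose Φ : {0,1}^n → ℝ satisfies Σ_x |Φ(x)| ≤ 1, ⟨Φ, C⟩ ≤ 0 for every conjunction C of at most d-1 literals (viewed as its 0/1 indicator function), and ⟨Φ, 2 - f⟩ > ε. Define Φ^∨ : {0,1}^n × {0,1}^n → ℝ by Φ^∨(x,y) = -Φ(x)Φ(y). Then Σ_{x,y} |Φ^∨(x,y)| ≤ 1, ⟨Φ^∨, C⟩ ≤ 0 for every conjunction C of at most d-1 literals over the 2n variables, and ⟨Φ^∨, f^∨⟩ > ε², where f^∨(x,y) = f(x) ∨ f(y) = f(x) + f(y) - f(x)f(y). -/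
/-- A conjunction of literals over variables indexed by `ι`, given as a partial assignment. -/
def Conj (ι : Type*) : Type _ := ι → Option Bool

/-- The width of a conjunction: the number of literals it mentions. -/
def Conj.width {ι : Type*} [Fintype ι] (c : Conj ι) : ℕ :=
  (Finset.univ.filter fun i => (c i).isSome).card

/-- The 0/1 indicator function of a conjunction. -/
def Conj.eval {ι : Type*} [Fintype ι] [DecidableEq ι] (c : Conj ι) (x : ι → Bool) : ℝ :=
  if ∀ i b, c i = some b → x i = b then 1 else 0

/-- If `Φ` is a dual certificate of `⟨Φ, 2 - f⟩ > ε` (with `‖Φ‖₁ ≤ 1` and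
`⟨Φ, C⟩ ≤ 0` for all conjunctions `C` of width `≤ d - 1`), then `Φ^∨(x,y) := -Φ(x)Φ(y)` has
`‖Φ^∨‖₁ ≤ 1`, satisfies `⟨Φ^∨, C⟩ ≤ 0` for all conjunctions of width `≤ d - 1` over the `2n`
variables (which factor as `C₁(x)·C₂(y)`), and `⟨Φ^∨, f^∨⟩ > ε²`, where
`f^∨(x,y) = f(x) ∨ f(y) = f(x) + f(y) - f(x)f(y)`. -/
theorem ufa_stmt3 (n d : ℕ) (ε : ℝ) (hε : 0 < ε) (f Φ : (Fin n → Bool) → ℝ)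
    (hf : ∀ x, f x = 0 ∨ f x = 1)
    (hnorm : ∑ x, |Φ x| ≤ 1)
    (hC : ∀ C : Conj (Fin n), C.width ≤ d - 1 → ∑ x, Φ x * C.eval x ≤ 0)
    (hval : ε < ∑ x, Φ x * (2 - f x)) :
    (∑ x, ∑ y, |(-(Φ x * Φ y))| ≤ 1) ∧
    (∀ C₁ C₂ : Conj (Fin n), C₁.width + C₂.width ≤ d - 1 →
      ∑ x, ∑ y, (-(Φ x * Φ y)) * (C₁.eval x * C₂.eval y) ≤ 0) ∧
    (ε ^ 2 < ∑ x, ∑ y, (-(Φ x * Φ y)) * (f x + f y - f x * f y)) := by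
  have habs : 0 ≤ ∑ x, |Φ x| := Finset.sum_nonneg fun x _ => abs_nonneg _
  -- the trivial (empty) conjunction
  have hSle : (∑ x, Φ x) ≤ 0 := by
    have h := hC (fun _ => none) (by simp [Conj.width])
    simpa [Conj.eval] using h
  set S := ∑ x, Φ x with hS
  set A := ∑ x, Φ x * f x with hA
  have h2 : ∑ x, Φ x * (2 - f x) = 2 * S - A := by
    rw [hS, hA, Finset.mul_sum, ← Finset.sum_sub_distrib]
    exact Finset.sum_congr rfl fun x _ => by ring
  have hAlt : ε < 2 * S - A := h2 ▸ hval
  refine ⟨?_, ?_, ?_⟩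
  · have e : ∑ x, ∑ y, |(-(Φ x * Φ y))| = (∑ x, |Φ x|) * (∑ y, |Φ y|) := by
      rw [Finset.sum_mul_sum]
      exact Finset.sum_congr rfl fun x _ => Finset.sum_congr rfl fun y _ => by
        rw [abs_neg, abs_mul]
    rw [e]
    nlinarith
  · intro C₁ C₂ hw
    have e : ∑ x, ∑ y, (-(Φ x * Φ y)) * (C₁.eval x * C₂.eval y)
        = -((∑ x, Φ x * C₁.eval x) * (∑ y, Φ y * C₂.eval y)) := by
      rw [Finset.sum_mul_sum, ← Finset.sum_neg_distrib]
      refine Finset.sum_congr rfl fun x _ => ?_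
      rw [← Finset.sum_neg_distrib]
      exact Finset.sum_congr rfl fun y _ => by ring
    rw [e]
    have h1 := hC C₁ (by omega)
    have h2 := hC C₂ (by omega)
    nlinarith
  · have e : ∑ x, ∑ y, (-(Φ x * Φ y)) * (f x + f y - f x * f y)
        = A * A - A * S - S * A := by
      rw [hA, hS, Finset.sum_mul_sum, Finset.sum_mul_sum, Finset.sum_mul_sum,
        ← Finset.sum_sub_distrib, ← Finset.sum_sub_distrib]
      refine Finset.sum_congr rfl fun x _ => ?_
      rw [← Finset.sum_sub_distrib, ← Finset.sum_sub_distrib]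
      exact Finset.sum_congr rfl fun y _ => by ring
    rw [e]
    have h1 : ε < -A := by linarith
    have h2 : ε < 2 * S - A := hAlt
    nlinarith
end

section
/- The approximate nonnegative degree satisfies deg⁺_{ε²}(f^∨) ≥ deg⁺_ε(2 - f) for any boolean-valued function f : {0,1}^n → {0,1} and any error ε > 0, where f^∨(x,y) = f(x) ∨ f(y). -/
/-- `g` is a conical `d`-junta: a nonnegative linear combination of width-`≤ d` conjunctions. -/
def IsConicalJunta {ι : Type*} [Fintype ι] [DecidableEq ι] (d : ℕ)
    (g : (ι → Bool) → ℝ) : Prop :=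
  ∃ (m : ℕ) (c : Fin m → Conj ι) (w : Fin m → ℝ),
    (∀ i, 0 ≤ w i) ∧ (∀ i, (c i).width ≤ d) ∧
    ∀ x, g x = ∑ i, w i * (c i).eval x

/-- The `ε`-approximate nonnegative degree of `f`: the least `d` such that some conical
`d`-junta approximates `f` within `ε` pointwise. -/
noncomputable def nndeg {ι : Type*} [Fintype ι] [DecidableEq ι] (ε : ℝ)
    (f : (ι → Bool) → ℝ) : ℕ :=
  sInf {d | ∃ g, IsConicalJunta d g ∧ ∀ x, |f x - g x| ≤ ε}

/-!
By LP duality, `deg⁺_ε(2 - f) > d` gives `Φ` with `⟪Φ, C⟫ ≤ 0` for every conjunction `C` of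
width at most `d` and `⟪Φ, 2 - f⟫ > ε ‖Φ‖₁`; the duality comes from Hahn–Banach separation of
`2 - f` from the sup-norm `ε`-neighbourhood of the cone of conical `d`-juntas, which is closed
near `2 - f` because the weights of a junta are bounded by its values.

Then `-Φ ⊗ Φ` is a dual witness for `f^∨`. A conjunction of width at most `d` on the pair of
inputs is a product `C₁(x) C₂(y)` of two such conjunctions, on which `-Φ ⊗ Φ` takes the value
`-⟪Φ, C₁⟫⟪Φ, C₂⟫ ≤ 0`. With `s = ⟪Φ, 1⟫ ≤ 0` and `t = ⟪Φ, f⟫`, expanding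
`f^∨ = f(x) + f(y) - f(x) f(y)` gives `⟪-Φ ⊗ Φ, f^∨⟫ = (-t)(2s - t)`, and both factors exceed
`ε ‖Φ‖₁` since `2s - t = ⟪Φ, 2 - f⟫` and `-t ≥ 2s - t`. As `‖Φ ⊗ Φ‖₁ = ‖Φ‖₁²`, no conical
`d`-junta is within `ε²` of `f^∨`.
-/

open Finset

namespace Conj

variable {ι κ : Type*} [Fintype ι] [Fintype κ]

def point (c : Conj ι) : ι → Bool := fun i => (c i).getD true

def empty : Conj ι := fun _ => none

def ofPoint (y : ι → Bool) : Conj ι := fun i => some (y i)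

def left (c : Conj (ι ⊕ κ)) : Conj ι := fun i => c (Sum.inl i)

def right (c : Conj (ι ⊕ κ)) : Conj κ := fun j => c (Sum.inr j)

@[simp] lemma width_empty : (empty : Conj ι).width = 0 := by
  simp [width, empty]

@[simp] lemma width_ofPoint (y : ι → Bool) : (ofPoint y).width = Fintype.card ι := by
  simp [width, ofPoint]

lemma width_left_le (c : Conj (ι ⊕ κ)) : c.left.width ≤ c.width :=
  card_le_card_of_injOn Sum.inl
    (fun _ hi => mem_filter.mpr ⟨mem_univ _, (mem_filter.mp hi).2⟩) Sum.inl_injective.injOn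

lemma width_right_le (c : Conj (ι ⊕ κ)) : c.right.width ≤ c.width :=
  card_le_card_of_injOn Sum.inr
    (fun _ hi => mem_filter.mpr ⟨mem_univ _, (mem_filter.mp hi).2⟩) Sum.inr_injective.injOn

variable [DecidableEq ι]

instance : Fintype (Conj ι) := inferInstanceAs (Fintype (ι → Option Bool))

lemma eval_nonneg (c : Conj ι) (x : ι → Bool) : 0 ≤ c.eval x := by
  unfold eval; split_ifs <;> norm_num

lemma eval_point (c : Conj ι) : c.eval c.point = 1 :=
  if_pos fun _ _ hb => by simp [point, hb]

@[simp] lemma eval_empty (x : ι → Bool) : (empty : Conj ι).eval x = 1 :=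
  if_pos fun _ _ hb => by simp [empty] at hb

lemma eval_ofPoint (y x : ι → Bool) : (ofPoint y).eval x = if x = y then 1 else 0 := by
  simp [eval, ofPoint, funext_iff]

lemma eval_sumElim [DecidableEq κ] (c : Conj (ι ⊕ κ)) (x : ι → Bool) (y : κ → Bool) :
    c.eval (Sum.elim x y) = c.left.eval x * c.right.eval y := by
  simp only [eval, left, right, Sum.forall, Sum.elim_inl, Sum.elim_inr]
  split_ifs <;> simp_all

end Conj

section Junta

variable {ι : Type*} [Fintype ι] [DecidableEq ι]

lemma isConicalJunta_sum_smul {J : Type*} [Fintype J] {d : ℕ} (c : J → Conj ι)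
    (hc : ∀ j, (c j).width ≤ d) (w : J → ℝ) (hw : 0 ≤ w) :
    IsConicalJunta d (∑ j, w j • (c j).eval) := by
  let e := (Fintype.equivFin J).symm
  refine ⟨Fintype.card J, c ∘ e, w ∘ e, fun _ => hw _, fun _ => hc _, fun x => ?_⟩
  simp only [Finset.sum_apply, Pi.smul_apply, smul_eq_mul, Function.comp_apply]
  exact (Fintype.sum_equiv e _ _ fun _ => rfl).symm

lemma isConicalJunta_card_of_nonneg {F : (ι → Bool) → ℝ} (hF : 0 ≤ F) :
    IsConicalJunta (Fintype.card ι) F := by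
  convert isConicalJunta_sum_smul Conj.ofPoint (fun y => (Conj.width_ofPoint y).le) F hF
  ext x
  simp [Finset.sum_apply, Conj.eval_ofPoint]

lemma IsConicalJunta.sum_sum_mul_nonneg {κ : Type*} [Fintype κ] [DecidableEq κ] {d : ℕ}
    {h : (ι ⊕ κ → Bool) → ℝ} (hh : IsConicalJunta d h) {Φ : (ι → Bool) → ℝ}
    {Ψ : (κ → Bool) → ℝ} (hΦ : ∀ C : Conj ι, C.width ≤ d → Φ ⬝ᵥ C.eval ≤ 0)
    (hΨ : ∀ C : Conj κ, C.width ≤ d → Ψ ⬝ᵥ C.eval ≤ 0) :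
    0 ≤ ∑ x, ∑ y, Φ x * Ψ y * h (Sum.elim x y) := by
  obtain ⟨m, c, w, hw, hc, hrep⟩ := hh
  have hsplit : ∑ x, ∑ y, Φ x * Ψ y * h (Sum.elim x y)
      = ∑ i, w i * ((Φ ⬝ᵥ (c i).left.eval) * (Ψ ⬝ᵥ (c i).right.eval)) := by
    simp only [dotProduct, sum_mul_sum]
    simp only [mul_sum, hrep, Conj.eval_sumElim]
    symm
    rw [sum_comm]
    exact sum_congr rfl fun i _ => sum_comm.trans <| sum_congr rfl
      fun x _ => sum_congr rfl fun y _ => by ring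
  rw [hsplit]
  exact sum_nonneg fun i _ => mul_nonneg (hw i) <| mul_nonneg_of_nonpos_of_nonpos
    (hΦ _ ((c i).width_left_le.trans (hc i))) (hΨ _ ((c i).width_right_le.trans (hc i)))

end Junta

section Duality

open Metric Pointwise

variable {ι : Type*} [Fintype ι] [DecidableEq ι] (d : ℕ)

/-- Indexing the weights by the finitely many conjunctions, rather than by a list as in
`IsConicalJunta`, makes the juntas with bounded weights a compact set. -/
noncomputable def juntaOfWeights : ({C : Conj ι // C.width ≤ d} → ℝ) →ₗ[ℝ] (ι → Bool) → ℝ :=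
  Fintype.linearCombination ℝ fun C => C.1.eval

variable {d}

lemma juntaOfWeights_apply (W : {C : Conj ι // C.width ≤ d} → ℝ) :
    juntaOfWeights d W = ∑ C, W C • C.1.eval :=
  Fintype.linearCombination_apply _ _ _

lemma isConicalJunta_juntaOfWeights {W : {C : Conj ι // C.width ≤ d} → ℝ} (hW : 0 ≤ W) :
    IsConicalJunta d (juntaOfWeights d W) := by
  rw [juntaOfWeights_apply]
  exact isConicalJunta_sum_smul _ (fun C => C.2) W hW

lemma weight_le_juntaOfWeights {W : {C : Conj ι // C.width ≤ d} → ℝ} (hW : 0 ≤ W)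
    (C : {C : Conj ι // C.width ≤ d}) : W C ≤ juntaOfWeights d W C.1.point := by
  rw [juntaOfWeights_apply, Finset.sum_apply]
  calc W C = W C • C.1.eval C.1.point := by rw [Conj.eval_point, smul_eq_mul, mul_one]
    _ ≤ ∑ C', (W C' • C'.1.eval) C.1.point :=
      single_le_sum (f := fun C' => W C' * C'.1.eval C.1.point)
        (fun C' _ => mul_nonneg (hW C') (C'.1.eval_nonneg _)) (mem_univ C)

/-- Near `F` the set agrees with its compact part with weights at most `‖F‖ + 1 + ε`
(by `weight_le_juntaOfWeights`), so it is closed there. -/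
lemma notMem_closure_juntaOfWeights_add_closedBall {ε : ℝ} {F : (ι → Bool) → ℝ}
    (hF : F ∉ juntaOfWeights d '' Set.Ici 0 + closedBall 0 ε) :
    F ∉ closure (juntaOfWeights d '' Set.Ici 0 + closedBall 0 ε) := by
  set M : ℝ := ‖F‖ + 1 + ε
  set K := juntaOfWeights d '' Set.Icc 0 (fun _ => M) + closedBall (0 : (ι → Bool) → ℝ) ε
  have hK : IsClosed K :=
    ((isCompact_Icc.image (juntaOfWeights d).continuous_of_finiteDimensional).add
      (isCompact_closedBall 0 ε)).isClosed
  have hnear : ball F 1 ∩ (juntaOfWeights d '' Set.Ici 0 + closedBall 0 ε) ⊆ K := by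
    rintro _ ⟨hv, _, ⟨W, hW, rfl⟩, e, he, rfl⟩
    refine ⟨_, ⟨W, ⟨hW, fun C => ?_⟩, rfl⟩, e, he, rfl⟩
    set p := C.1.point
    set v := juntaOfWeights d W + e
    have hv : ‖v‖ ≤ ‖F‖ + 1 := by
      rw [mem_ball, dist_eq_norm] at hv
      linarith [norm_le_norm_add_norm_sub' v F]
    calc W C ≤ juntaOfWeights d W p := weight_le_juntaOfWeights hW C
      _ = v p - e p := by simp [v]
      _ ≤ ‖v‖ + ‖e‖ := by
        have hvp : |v p| ≤ ‖v‖ := norm_le_pi_norm v p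
        have hep : |e p| ≤ ‖e‖ := norm_le_pi_norm e p
        linarith [le_abs_self (v p), neg_abs_le (e p)]
      _ ≤ M := add_le_add hv (mem_closedBall_zero_iff.mp he)
  intro hcl
  exact hF (Set.add_subset_add_right (Set.image_mono fun W hW => hW.1)
    (hK.closure_subset_iff.mpr hnear (isOpen_ball.inter_closure ⟨mem_ball_self one_pos, hcl⟩)))

theorem exists_dual_of_not_exists_isConicalJunta {ε : ℝ} (hε : 0 ≤ ε) {F : (ι → Bool) → ℝ}
    (hF : ¬ ∃ g, IsConicalJunta d g ∧ ∀ x, |F x - g x| ≤ ε) :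
    ∃ Φ : (ι → Bool) → ℝ, (∀ C : Conj ι, C.width ≤ d → Φ ⬝ᵥ C.eval ≤ 0) ∧
      ε * ∑ x, |Φ x| < Φ ⬝ᵥ F := by
  classical
  set S := juntaOfWeights d '' Set.Ici 0 + closedBall (0 : (ι → Bool) → ℝ) ε
  have hFS : F ∉ S := by
    rintro ⟨_, ⟨W, hW, rfl⟩, e, he, hWe⟩
    refine hF ⟨_, isConicalJunta_juntaOfWeights hW, fun x => ?_⟩
    simp only [← hWe, Pi.add_apply, add_sub_cancel_left]
    exact (norm_le_pi_norm e x).trans (mem_closedBall_zero_iff.mp he)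
  have hSconv : Convex ℝ S :=
    ((convex_Ici 0).linear_image (juntaOfWeights d)).add (convex_closedBall 0 ε)
  obtain ⟨ℓ, u, hℓS, huF⟩ := geometric_hahn_banach_closed_point hSconv.closure isClosed_closure
    (notMem_closure_juntaOfWeights_add_closedBall hFS)
  set Φ : (ι → Bool) → ℝ := fun x => ℓ fun y => if x = y then 1 else 0
  have hℓ : ∀ v, ℓ v = Φ ⬝ᵥ v := fun v => by
    rw [dotProduct_comm]
    exact ℓ.toLinearMap.pi_apply_eq_sum_univ v
  have hsep : ∀ W, 0 ≤ W → ∀ e ∈ closedBall 0 ε, Φ ⬝ᵥ juntaOfWeights d W + Φ ⬝ᵥ e < u :=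
    fun W hW e he => by
      rw [← hℓ, ← hℓ, ← map_add]
      exact hℓS _ (subset_closure ⟨_, ⟨W, hW, rfl⟩, e, he, rfl⟩)
  have hu : 0 < u := by simpa using hsep 0 le_rfl 0 (mem_closedBall_self hε)
  refine ⟨Φ, fun C hC => ?_, ?_⟩
  · by_contra! hpos
    have := hsep (Pi.single ⟨C, hC⟩ (u / (Φ ⬝ᵥ C.eval)))
      (Pi.single_nonneg.mpr (div_pos hu hpos).le) 0 (mem_closedBall_self hε)
    rw [juntaOfWeights, Fintype.linearCombination_apply_single, dotProduct_smul, smul_eq_mul,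
      div_mul_cancel₀ _ hpos.ne', dotProduct_zero, add_zero] at this
    exact this.false
  · set e : (ι → Bool) → ℝ := fun x => ε * SignType.sign (Φ x)
    have he : e ∈ closedBall 0 ε := by
      refine mem_closedBall_zero_iff.mpr ((pi_norm_le_iff_of_nonneg hε).mpr fun x => ?_)
      rw [Real.norm_eq_abs, abs_mul, abs_of_nonneg hε]
      exact mul_le_of_le_one_right hε (by cases SignType.sign (Φ x) <;> simp)
    have hΦe : Φ ⬝ᵥ e = ε * ∑ x, |Φ x| := by
      simp only [dotProduct, e, mul_sum]
      exact sum_congr rfl fun x _ => by rw [← self_mul_sign (Φ x)]; ring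
    have := hsep 0 le_rfl e he
    rw [map_zero, dotProduct_zero, zero_add, hΦe] at this
    linarith [hℓ F]

end Duality

lemma sum_sum_mul_le_of_abs_le {X Y : Type*} [Fintype X] [Fintype Y] (Φ : X → ℝ) (Ψ : Y → ℝ)
    {G : X → Y → ℝ} {δ : ℝ} (hG : ∀ x y, |G x y| ≤ δ) :
    ∑ x, ∑ y, Φ x * Ψ y * G x y ≤ δ * ((∑ x, |Φ x|) * ∑ y, |Ψ y|) := by
  rw [sum_mul_sum, mul_sum]
  refine sum_le_sum fun x _ => ?_
  rw [mul_sum]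
  refine sum_le_sum fun y _ => ?_
  calc Φ x * Ψ y * G x y ≤ |Φ x * Ψ y * G x y| := le_abs_self _
    _ = |Φ x| * |Ψ y| * |G x y| := by rw [abs_mul, abs_mul]
    _ ≤ |Φ x| * |Ψ y| * δ := by gcongr; exact hG x y
    _ = δ * (|Φ x| * |Ψ y|) := mul_comm _ _

theorem exists_sq_lt_abs_sub_of_dual {ι : Type*} [Fintype ι] [DecidableEq ι] {d : ℕ} {ε : ℝ}
    (hε : 0 ≤ ε) {f Φ : (ι → Bool) → ℝ} (hΦ : ∀ C : Conj ι, C.width ≤ d → Φ ⬝ᵥ C.eval ≤ 0)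
    (hΦf : ε * ∑ x, |Φ x| < Φ ⬝ᵥ fun x => 2 - f x) {h : (ι ⊕ ι → Bool) → ℝ}
    (hh : IsConicalJunta d h) :
    ∃ z, ε ^ 2 <
      |f (z ∘ Sum.inl) + f (z ∘ Sum.inr) - f (z ∘ Sum.inl) * f (z ∘ Sum.inr) - h z| := by
  by_contra! happrox
  set N := ∑ x, |Φ x|
  set s := ∑ x, Φ x
  set t := Φ ⬝ᵥ f
  set fOr : (ι → Bool) → (ι → Bool) → ℝ := fun x y => f x + f y - f x * f y
  have hs : s ≤ 0 := by
    simpa [dotProduct] using hΦ Conj.empty (by simp)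
  have hΦf' : Φ ⬝ᵥ (fun x => 2 - f x) = 2 * s - t := by
    simp only [dotProduct, s, t, mul_sub, sum_sub_distrib, ← sum_mul]
    ring
  have hOr : ∑ x, ∑ y, Φ x * Φ y * fOr x y = 2 * s * t - t ^ 2 := by
    rw [show 2 * s * t - t ^ 2 = s * t + t * s - t * t by ring]
    simp only [s, t, dotProduct, sum_mul_sum, ← sum_add_distrib, ← sum_sub_distrib]
    exact sum_congr rfl fun x _ => sum_congr rfl fun y _ => by ring
  have herr : ∑ x, ∑ y, Φ x * Φ y * (h (Sum.elim x y) - fOr x y) ≤ ε ^ 2 * (N * N) :=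
    sum_sum_mul_le_of_abs_le Φ Φ fun x y => by
      simpa [fOr, abs_sub_comm] using happrox (Sum.elim x y)
  have hsplit : ∑ x, ∑ y, Φ x * Φ y * h (Sum.elim x y) = ∑ x, ∑ y, Φ x * Φ y * fOr x y +
      ∑ x, ∑ y, Φ x * Φ y * (h (Sum.elim x y) - fOr x y) := by
    rw [← sum_add_distrib]
    exact sum_congr rfl fun x _ => by
      rw [← sum_add_distrib]
      exact sum_congr rfl fun y _ => by ring
  have hN : 0 ≤ ε * N := mul_nonneg hε (sum_nonneg fun x _ => abs_nonneg _)
  have hprod : (ε * N) * (ε * N) < (-t) * (2 * s - t) :=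
    mul_lt_mul'' (by linarith) (by linarith) hN hN
  linarith [hh.sum_sum_mul_nonneg hΦ hΦ]

/-- For any boolean-valued `f` and `ε > 0`,
`deg⁺_{ε²}(f^∨) ≥ deg⁺_ε(2 - f)`, where `f^∨(x,y) = f(x) ∨ f(y)`
(the inputs to `f^∨` are indexed by `Fin n ⊕ Fin n`). -/
theorem ufa_stmt4 (n : ℕ) (ε : ℝ) (hε : 0 < ε) (f : (Fin n → Bool) → ℝ)
    (hf : ∀ x, f x = 0 ∨ f x = 1) :
    nndeg ε (fun x => 2 - f x) ≤
      nndeg (ε ^ 2) (fun z : (Fin n ⊕ Fin n) → Bool =>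
        f (z ∘ Sum.inl) + f (z ∘ Sum.inr) - f (z ∘ Sum.inl) * f (z ∘ Sum.inr)) := by
  set fOr := fun z : (Fin n ⊕ Fin n) → Bool =>
    f (z ∘ Sum.inl) + f (z ∘ Sum.inr) - f (z ∘ Sum.inl) * f (z ∘ Sum.inr)
  have hfOr : 0 ≤ fOr := fun z => by
    rcases hf (z ∘ Sum.inl) with h1 | h1 <;> rcases hf (z ∘ Sum.inr) with h2 | h2 <;>
      simp [fOr, h1, h2]
  obtain ⟨h, hh, happrox⟩ : nndeg (ε ^ 2) fOr ∈
      {d | ∃ g, IsConicalJunta d g ∧ ∀ z, |fOr z - g z| ≤ ε ^ 2} :=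
    Nat.sInf_mem ⟨_, fOr, isConicalJunta_card_of_nonneg hfOr, fun z => by simp; positivity⟩
  refine Nat.sInf_le ?_
  by_contra hno
  obtain ⟨Φ, hΦ, hΦf⟩ := exists_dual_of_not_exists_isConicalJunta hε.le hno
  obtain ⟨z, hz⟩ := exists_sq_lt_abs_sub_of_dual hε.le hΦ hΦf hh
  exact (happrox z).not_gt hz
end

section
/- Let f : {0,1}^n → {0,1} be boolean-valued, let 0 < δ < 1/2, and set k = ⌈log_{3/4} δ⌉ and ε = ln(1+δ)/k. If g is a conical d-junta with |g(x) - (1 + f(x))| ≤ ε for all x, then g' := ((g + ε)/2)^k is a conical (kd)-junta with |g'(x) - f(x)| ≤ δ for all x. Consequently deg⁺_ε(1+f) ≥ deg⁺_δ(f)/k. -/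
/-!
Conical juntas are closed under sums, nonnegative scaling and products, where the product of
two conjunctions is their merge (or identically zero if they contradict each other) and widths
add. Hence `((g + ε) / 2) ^ k` is a conical `(k d)`-junta. Pointwise, `(g + ε) / 2` lies in
`[0, 3/4]` where `f = 0` and in `[1, 1 + ε]` where `f = 1`; the choice of `k` gives
`(3/4)^k ≤ δ`, and that of `ε` gives `(1 + ε)^k ≤ exp (k ε) = 1 + δ`.
-/

namespace Conj

variable {ι : Type*}

def Sat (c : Conj ι) (x : ι → Bool) : Prop := ∀ i b, c i = some b → x i = b

def Compatible (c₁ c₂ : Conj ι) : Prop := ∀ i b₁ b₂, c₁ i = some b₁ → c₂ i = some b₂ → b₁ = b₂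

/-- The conjunction of the literals of `c₁` and `c₂` (those of `c₁` win on a clash). -/
def merge (c₁ c₂ : Conj ι) : Conj ι := fun i => (c₁ i).or (c₂ i)

lemma compatible_of_sat {c₁ c₂ : Conj ι} {x : ι → Bool} (h₁ : c₁.Sat x) (h₂ : c₂.Sat x) :
    Compatible c₁ c₂ :=
  fun i _ _ hb₁ hb₂ => (h₁ i _ hb₁).symm.trans (h₂ i _ hb₂)

lemma sat_merge_iff {c₁ c₂ : Conj ι} (h : Compatible c₁ c₂) (x : ι → Bool) :
    (c₁.merge c₂).Sat x ↔ c₁.Sat x ∧ c₂.Sat x := by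
  simp only [Sat, merge, Option.or_eq_some_iff]
  refine ⟨fun hm => ⟨fun i b hb => hm i b (.inl hb), fun i b hb => ?_⟩,
    fun ⟨h₁, h₂⟩ i b => Or.rec (h₁ i b) (fun hb => h₂ i b hb.2)⟩
  cases hc : c₁ i with
  | none => exact hm i b (.inr ⟨hc, hb⟩)
  | some b' => exact h i b' b hc hb ▸ hm i b' (.inl hc)

variable [Fintype ι]

lemma width_merge_le (c₁ c₂ : Conj ι) : (c₁.merge c₂).width ≤ c₁.width + c₂.width := by
  classical
  refine (Finset.card_le_card fun i hi => ?_).trans (Finset.card_union_le _ _)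
  simpa [merge, Option.isSome_or] using hi

variable [DecidableEq ι]

lemma eval_of_sat {c : Conj ι} {x : ι → Bool} (h : c.Sat x) : c.eval x = 1 := if_pos h

lemma eval_of_not_sat {c : Conj ι} {x : ι → Bool} (h : ¬c.Sat x) : c.eval x = 0 := if_neg h

lemma eval_mul_eval_of_compatible {c₁ c₂ : Conj ι} (h : Compatible c₁ c₂) (x : ι → Bool) :
    c₁.eval x * c₂.eval x = (c₁.merge c₂).eval x := by
  by_cases h₁ : c₁.Sat x <;> by_cases h₂ : c₂.Sat x <;>
    simp [eval_of_sat, eval_of_not_sat, sat_merge_iff h, *]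

lemma eval_mul_eval_of_not_compatible {c₁ c₂ : Conj ι} (h : ¬Compatible c₁ c₂)
    (x : ι → Bool) : c₁.eval x * c₂.eval x = 0 := by
  by_cases h₁ : c₁.Sat x
  · rw [eval_of_not_sat fun h₂ => h (compatible_of_sat h₁ h₂), mul_zero]
  · rw [eval_of_not_sat h₁, zero_mul]

end Conj

section ConicalJunta

variable {ι : Type*} [Fintype ι] [DecidableEq ι] {d d₁ d₂ : ℕ} {g g₁ g₂ : (ι → Bool) → ℝ}

lemma IsConicalJunta.of_fintype {κ : Type*} [Fintype κ] (c : κ → Conj ι) (w : κ → ℝ)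
    (hw : ∀ i, 0 ≤ w i) (hc : ∀ i, (c i).width ≤ d) (hg : ∀ x, g x = ∑ i, w i * (c i).eval x) :
    IsConicalJunta d g := by
  let e := Fintype.equivFin κ
  refine ⟨Fintype.card κ, c ∘ e.symm, w ∘ e.symm, fun _ => hw _, fun _ => hc _, fun x => ?_⟩
  rw [hg x]
  exact (Fintype.sum_equiv e.symm _ _ fun _ => rfl).symm

lemma isConicalJunta_const {a : ℝ} (ha : 0 ≤ a) : IsConicalJunta d fun _ : ι → Bool => a :=
  ⟨1, fun _ _ => none, fun _ => a, fun _ => ha, fun _ => by simp [Conj.width],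
    fun _ => by simp [Conj.eval]⟩

lemma IsConicalJunta.add (h₁ : IsConicalJunta d g₁) (h₂ : IsConicalJunta d g₂) :
    IsConicalJunta d fun x => g₁ x + g₂ x := by
  obtain ⟨m₁, c₁, w₁, hw₁, hc₁, hg₁⟩ := h₁
  obtain ⟨m₂, c₂, w₂, hw₂, hc₂, hg₂⟩ := h₂
  refine .of_fintype (Sum.elim c₁ c₂) (Sum.elim w₁ w₂) (Sum.rec hw₁ hw₂) (Sum.rec hc₁ hc₂)
    fun x => ?_
  simp [Fintype.sum_sum_type, hg₁, hg₂]

lemma IsConicalJunta.div_const (h : IsConicalJunta d g) {a : ℝ} (ha : 0 ≤ a) :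
    IsConicalJunta d fun x => g x / a := by
  obtain ⟨m, c, w, hw, hc, hg⟩ := h
  refine ⟨m, c, fun i => w i / a, fun i => div_nonneg (hw i) ha, hc, fun x => ?_⟩
  simp only [hg, Finset.sum_div, div_mul_eq_mul_div]

lemma IsConicalJunta.mul (h₁ : IsConicalJunta d₁ g₁) (h₂ : IsConicalJunta d₂ g₂) :
    IsConicalJunta (d₁ + d₂) fun x => g₁ x * g₂ x := by
  classical
  obtain ⟨m₁, c₁, w₁, hw₁, hc₁, hg₁⟩ := h₁
  obtain ⟨m₂, c₂, w₂, hw₂, hc₂, hg₂⟩ := h₂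
  refine .of_fintype (fun p : Fin m₁ × Fin m₂ => (c₁ p.1).merge (c₂ p.2))
    (fun p => if Conj.Compatible (c₁ p.1) (c₂ p.2) then w₁ p.1 * w₂ p.2 else 0)
    (fun p => by split_ifs <;> first | positivity | exact mul_nonneg (hw₁ _) (hw₂ _))
    (fun p => (Conj.width_merge_le _ _).trans (add_le_add (hc₁ _) (hc₂ _))) fun x => ?_
  rw [hg₁, hg₂, Finset.sum_mul_sum, Fintype.sum_prod_type]
  refine Finset.sum_congr rfl fun i _ => Finset.sum_congr rfl fun j _ => ?_
  rw [mul_mul_mul_comm]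
  split_ifs with h
  · rw [Conj.eval_mul_eval_of_compatible h]
  · rw [Conj.eval_mul_eval_of_not_compatible h, mul_zero, zero_mul]

lemma IsConicalJunta.pow (h : IsConicalJunta d g) (k : ℕ) :
    IsConicalJunta (k * d) fun x => g x ^ k := by
  induction k with
  | zero => simpa using isConicalJunta_const zero_le_one
  | succ k ih => simpa only [pow_succ, add_one_mul] using ih.mul h

/-- Every nonnegative function is a conical junta, as a combination of the minterms. -/
lemma IsConicalJunta.of_nonneg (hg : ∀ x, 0 ≤ g x) : IsConicalJunta (Fintype.card ι) g := by
  have hminterm (y x : ι → Bool) : Conj.eval (fun i => some (y i)) x = if y = x then 1 else 0 := by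
    simp only [Conj.eval, Option.some.injEq, funext_iff]
    grind
  exact .of_fintype (fun y i => some (y i)) g hg (fun y => by simp [Conj.width])
    fun x => by simp [hminterm]

lemma exists_isConicalJunta_approx (hg : ∀ x, 0 ≤ g x) {ε : ℝ} (hε : 0 ≤ ε) :
    ∃ d g', IsConicalJunta d g' ∧ ∀ x, |g x - g' x| ≤ ε :=
  ⟨_, g, .of_nonneg hg, fun x => by simpa using hε⟩

lemma nndeg_le_mul_of_forall {ε δ : ℝ} {f h : (ι → Bool) → ℝ} {k : ℕ}
    (hne : ∃ d g, IsConicalJunta d g ∧ ∀ x, |h x - g x| ≤ ε)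
    (htrans : ∀ d g, IsConicalJunta d g → (∀ x, |h x - g x| ≤ ε) →
      ∃ g', IsConicalJunta (k * d) g' ∧ ∀ x, |f x - g' x| ≤ δ) :
    nndeg δ f ≤ k * nndeg ε h := by
  obtain ⟨g, hg, hgh⟩ := Nat.sInf_mem (s := {d | ∃ g, IsConicalJunta d g ∧ ∀ x, |h x - g x| ≤ ε}) hne
  exact Nat.sInf_le (htrans _ g hg hgh)

end ConicalJunta

lemma two_le_ceil_log_div_log {a δ : ℝ} (hδ : 0 < δ) (hδa : δ < a) (ha : a < 1) :
    2 ≤ ⌈Real.log δ / Real.log a⌉₊ := by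
  have hloga : Real.log a < 0 := Real.log_neg (hδ.trans hδa) ha
  refine Nat.lt_ceil.2 ?_
  exact_mod_cast (one_lt_div_of_neg hloga).2 (Real.log_lt_log hδ hδa)

lemma pow_ceil_log_div_log_le {a δ : ℝ} (ha₀ : 0 < a) (ha₁ : a < 1) (hδ : 0 < δ) :
    a ^ ⌈Real.log δ / Real.log a⌉₊ ≤ δ := by
  have hloga : Real.log a < 0 := Real.log_neg ha₀ ha₁
  rw [← Real.log_le_log_iff (pow_pos ha₀ _) hδ, Real.log_pow, ← div_le_iff_of_neg hloga]
  exact Nat.le_ceil _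

lemma one_add_pow_le_exp_mul {ε : ℝ} (hε : -1 ≤ ε) (k : ℕ) : (1 + ε) ^ k ≤ Real.exp (k * ε) := by
  rw [Real.exp_nat_mul]
  gcongr
  · linarith
  · linarith [Real.add_one_le_exp ε]

lemma abs_half_add_pow_sub_le {b y ε δ : ℝ} {k : ℕ} (hb : b = 0 ∨ b = 1) (hε : ε ≤ 1 / 4)
    (h34 : (3 / 4) ^ k ≤ δ) (h1ε : (1 + ε) ^ k ≤ 1 + δ) (hy : |y - (1 + b)| ≤ ε) :
    |((y + ε) / 2) ^ k - b| ≤ δ := by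
  have hδ : 0 ≤ δ := (by positivity : (0 : ℝ) ≤ (3 / 4) ^ k).trans h34
  rw [abs_le] at hy ⊢
  rcases hb with rfl | rfl
  · have hlo : 0 ≤ (y + ε) / 2 := by linarith
    have hhi : ((y + ε) / 2) ^ k ≤ (3 / 4) ^ k := pow_le_pow_left₀ hlo (by linarith) k
    constructor <;> linarith [pow_nonneg hlo k]
  · have hlo : 1 ≤ ((y + ε) / 2) ^ k := one_le_pow₀ (by linarith)
    have hhi : ((y + ε) / 2) ^ k ≤ (1 + ε) ^ k := by gcongr <;> linarith
    constructor <;> linarith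

/-- Let `f` be boolean-valued, `0 < δ < 1/2`, `k = ⌈log_{3/4} δ⌉` and
`ε = ln(1+δ)/k`. If `g` is a conical `d`-junta with `|g(x) - (1 + f(x))| ≤ ε` for all `x`,
then `g' := ((g + ε)/2)^k` is a conical `(k·d)`-junta with `|g'(x) - f(x)| ≤ δ` for all `x`.
Consequently `deg⁺_ε(1 + f) ≥ deg⁺_δ(f)/k`. -/
theorem ufa_stmt5 (n : ℕ) (δ : ℝ) (hδ0 : 0 < δ) (hδ1 : δ < 1 / 2)
    (k : ℕ) (hk : k = ⌈Real.log δ / Real.log (3 / 4)⌉₊)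
    (ε : ℝ) (hε : ε = Real.log (1 + δ) / k)
    (f : (Fin n → Bool) → ℝ) (hf : ∀ x, f x = 0 ∨ f x = 1) :
    (∀ (d : ℕ) (g : (Fin n → Bool) → ℝ), IsConicalJunta d g →
      (∀ x, |g x - (1 + f x)| ≤ ε) →
      IsConicalJunta (k * d) (fun x => ((g x + ε) / 2) ^ k) ∧
      ∀ x, |((g x + ε) / 2) ^ k - f x| ≤ δ) ∧
    nndeg δ f ≤ k * nndeg ε (fun x => 1 + f x) := by
  have hk2 : (2 : ℝ) ≤ k := by
    exact_mod_cast hk ▸ two_le_ceil_log_div_log hδ0 (by linarith) (by norm_num)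
  have h34 : (3 / 4 : ℝ) ^ k ≤ δ := hk ▸ pow_ceil_log_div_log_le (by norm_num) (by norm_num) hδ0
  have hε0 : 0 ≤ ε := hε ▸ div_nonneg (Real.log_nonneg (by linarith)) k.cast_nonneg
  have hε4 : ε ≤ 1 / 4 := by
    rw [hε, div_le_iff₀ (by positivity)]
    nlinarith [Real.log_le_sub_one_of_pos (by linarith : 0 < 1 + δ)]
  have h1ε : (1 + ε) ^ k ≤ 1 + δ := calc
    (1 + ε) ^ k ≤ Real.exp (k * ε) := one_add_pow_le_exp_mul (by linarith) k
    _ = 1 + δ := by rw [hε, mul_div_cancel₀ _ (by positivity), Real.exp_log (by linarith)]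
  have amplify (d : ℕ) (g : (Fin n → Bool) → ℝ) (hg : IsConicalJunta d g)
      (hgf : ∀ x, |g x - (1 + f x)| ≤ ε) :
      IsConicalJunta (k * d) (fun x => ((g x + ε) / 2) ^ k) ∧
        ∀ x, |((g x + ε) / 2) ^ k - f x| ≤ δ :=
    ⟨((hg.add (isConicalJunta_const hε0)).div_const zero_le_two).pow k,
      fun x => abs_half_add_pow_sub_le (hf x) hε4 h34 h1ε (hgf x)⟩
  refine ⟨amplify, nndeg_le_mul_of_forall
    (exists_isConicalJunta_approx (fun x => by rcases hf x with h | h <;> simp [h]) hε0)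
    fun d g hg hgf => ?_⟩
  obtain ⟨hg', hg'f⟩ := amplify d g hg fun x => abs_sub_comm (g x) _ ▸ hgf x
  exact ⟨_, hg', fun x => abs_sub_comm (f x) _ ▸ hg'f x⟩
end

section
/- There is an NFA with O(n²) states recognizing the complement language {0,1}^* \ ⟨Disj^n_k⟩, where ⟨Disj^n_k⟩ = { ⟨S⟩⟨T⟩ : S, T ⊆ [n], |S| = |T| = k, S ∩ T = ∅ } and ⟨S⟩ ∈ {0,1}^n is the characteristic vector of S. -/
/-!
A word lies outside `⟨Disj^n_k⟩` iff its length is not `2n`, or one of its halves does not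
contain exactly `k` ones, or some column `i < n` carries a one in both halves. Each half and each
column gets a DFA that accepts every word of length `≠ 2n` and otherwise checks its condition,
keeping only the length read so far and the number of ones seen at a fixed set of positions, both
clamped: the length at `2n + 1`, the count just above the threshold it is compared with (`k + 1`
for a half, `2` for a column). That is `O(n k)` states per half and `O(n)` per column, and the
disjoint union of these `n + 2` DFAs is an NFA with `O(n²)` states.
-/

/-- The characteristic word `⟨S⟩ ∈ {0,1}^n` of a set `S ⊆ [n]`. -/
def encSet {n : ℕ} (S : Finset (Fin n)) : List Bool :=
  List.ofFn fun i : Fin n => decide (i ∈ S)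

open Finset

namespace NFA

variable {α ι : Type*} {σ : ι → Type*}

def sigma (M : ∀ i, NFA α (σ i)) : NFA α (Σ i, σ i) where
  step s a := Sigma.mk s.1 '' (M s.1).step s.2 a
  start := ⋃ i, Sigma.mk i '' (M i).start
  accept := {s | s.2 ∈ (M s.1).accept}

theorem sigma_evalFrom_image_mk (M : ∀ i, NFA α (σ i)) (i : ι) (S : Set (σ i)) (w : List α) :
    (sigma M).evalFrom (Sigma.mk i '' S) w = Sigma.mk i '' (M i).evalFrom S w := by
  induction w generalizing S with
  | nil => rfl
  | cons a w ih =>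
    rw [evalFrom_cons, evalFrom_cons, ← ih]
    congr 1
    ext s
    simp only [stepSet, sigma, Set.mem_iUnion, Set.mem_image, exists_prop]
    aesop

theorem mem_accepts_sigma (M : ∀ i, NFA α (σ i)) (w : List α) :
    w ∈ (sigma M).accepts ↔ ∃ i, w ∈ (M i).accepts := by
  rw [mem_accepts]
  change (∃ s ∈ {s : Σ i, σ i | s.2 ∈ (M s.1).accept},
    s ∈ (sigma M).evalFrom (⋃ i, Sigma.mk i '' (M i).start) w) ↔ _
  simp only [evalFrom_iUnion, sigma_evalFrom_image_mk, Set.mem_iUnion, Set.mem_image,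
    mem_accepts]
  constructor
  · rintro ⟨_, hacc, i, s, hs, rfl⟩
    exact ⟨i, s, hacc, hs⟩
  · rintro ⟨i, s, hacc, hs⟩
    exact ⟨⟨i, s⟩, hacc, i, s, hs, rfl⟩

end NFA

def onesIn (P : Finset ℕ) (w : List Bool) : ℕ := #{j ∈ P | w[j]? = some true}

theorem onesIn_append_singleton (P : Finset ℕ) (w : List Bool) (a : Bool) :
    onesIn P (w ++ [a]) = onesIn P w + if a ∧ w.length ∈ P then 1 else 0 := by
  have key (j : ℕ) :
      (w ++ [a])[j]? = some true ↔ w[j]? = some true ∨ (j = w.length ∧ a = true) := by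
    rcases lt_trichotomy j w.length with h | rfl | h
    · simp [List.getElem?_append_left h, h.ne]
    · simp
    · simp [List.getElem?_eq_none (show (w ++ [a]).length ≤ j by simpa using h),
        List.getElem?_eq_none h.le, h.ne']
  simp only [onesIn, key, filter_or]
  rw [card_union_of_disjoint]
  · congr 1
    by_cases ha : a = true <;> by_cases hw : w.length ∈ P <;> simp [ha, hw, filter_eq']
  · rw [disjoint_filter]
    rintro j - hj ⟨rfl, -⟩
    simp at hj

theorem two_le_onesIn_pair_iff {a b : ℕ} (hab : a ≠ b) (w : List Bool) :
    2 ≤ onesIn {a, b} w ↔ w[a]? = some true ∧ w[b]? = some true := by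
  have hle : onesIn {a, b} w ≤ 2 := (card_filter_le _ _).trans (card_pair hab).le
  calc 2 ≤ onesIn {a, b} w ↔ onesIn {a, b} w = #{a, b} := by rw [card_pair hab]; omega
    _ ↔ _ := card_filter_eq_iff.trans (by simp)

def countDFA (m c : ℕ) (P : Finset ℕ) (accept : ℕ → ℕ → Prop) :
    DFA Bool (Fin (m + 1) × Fin (c + 1)) where
  step s a := (Fin.clamp (s.1 + 1) m, if a ∧ ↑s.1 ∈ P then Fin.clamp (s.2 + 1) c else s.2)
  start := (0, 0)
  accept := {s | accept s.1 s.2}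

theorem countDFA_eval {m c : ℕ} {P : Finset ℕ} (hP : ∀ j ∈ P, j < m)
    (accept : ℕ → ℕ → Prop) (w : List Bool) :
    (countDFA m c P accept).eval w = (Fin.clamp w.length m, Fin.clamp (onesIn P w) c) := by
  induction w using List.reverseRecOn with
  | nil => ext <;> simp [countDFA, onesIn]
  | append_singleton w a ih =>
    have hmem : min w.length m ∈ P ↔ w.length ∈ P := by
      by_cases h : w.length ≤ m
      · rw [min_eq_left h]
      · rw [min_eq_right (by omega)]
        exact iff_of_false (fun hm => lt_irrefl m (hP m hm)) fun hw => h (hP _ hw).le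
    rw [DFA.eval_append_singleton, ih, onesIn_append_singleton]
    simp only [countDFA, Fin.coe_clamp, hmem, List.length_append, List.length_singleton]
    ext <;> split_ifs <;> simp only [Fin.coe_clamp, add_zero] <;> omega

theorem mem_countDFA_accepts {m c : ℕ} {P : Finset ℕ} (hP : ∀ j ∈ P, j < m)
    (accept : ℕ → ℕ → Prop) (w : List Bool) :
    w ∈ (countDFA m c P accept).accepts ↔ accept (min w.length m) (min (onesIn P w) c) := by
  rw [DFA.mem_accepts, countDFA_eval hP]
  rfl

theorem length_encSet {n : ℕ} (S : Finset (Fin n)) : (encSet S).length = n := by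
  simp [encSet]

theorem getElem?_encSet_eq_some_true {n : ℕ} (S : Finset (Fin n)) (j : ℕ) :
    (encSet S)[j]? = some true ↔ ∃ i ∈ S, (i : ℕ) = j := by
  simp only [encSet, List.getElem?_ofFn, Option.dite_none_right_eq_some, Option.some.injEq,
    decide_eq_true_eq]
  constructor
  · rintro ⟨_, hS⟩
    exact ⟨_, hS, rfl⟩
  · rintro ⟨i, hi, rfl⟩
    exact ⟨i.isLt, hi⟩

theorem encSet_injective (n : ℕ) : Function.Injective (encSet (n := n)) := by
  intro S T h
  ext i
  simpa [encSet] using congrFun (List.ofFn_injective h) i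

theorem exists_encSet_eq {n : ℕ} (l : List Bool) (hl : l.length = n) :
    ∃ S : Finset (Fin n), encSet S = l := by
  subst hl
  refine ⟨({i | l[i] = true} : Finset (Fin l.length)),
    List.ext_getElem (by simp [length_encSet]) fun j _ _ => ?_⟩
  simp [encSet]

theorem getElem?_encSet_val_eq_some_true {n : ℕ} (S : Finset (Fin n)) (i : Fin n) :
    (encSet S)[(i : ℕ)]? = some true ↔ i ∈ S := by
  simp [getElem?_encSet_eq_some_true, Fin.val_inj]

theorem encSet_append_inj {n : ℕ} {S T S' T' : Finset (Fin n)}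
    (h : encSet S ++ encSet T = encSet S' ++ encSet T') : S = S' ∧ T = T' := by
  obtain ⟨hS, hT⟩ := List.append_inj h (by simp [length_encSet])
  exact ⟨encSet_injective n hS, encSet_injective n hT⟩

section encSetAppend

variable {n : ℕ} (S T : Finset (Fin n))

theorem getElem?_encSet_append_of_lt {j : ℕ} (hj : j < n) :
    (encSet S ++ encSet T)[j]? = (encSet S)[j]? :=
  List.getElem?_append_left (by rwa [length_encSet])

theorem getElem?_encSet_append_add (j : ℕ) :
    (encSet S ++ encSet T)[n + j]? = (encSet T)[j]? := by
  rw [List.getElem?_append_right (by simp [length_encSet]), length_encSet, Nat.add_sub_cancel_left]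

theorem onesIn_range_encSet_append : onesIn (range n) (encSet S ++ encSet T) = #S := by
  rw [onesIn, ← card_map Fin.valEmbedding]
  congr 1
  ext j
  simp only [mem_filter, mem_range, mem_map, Fin.valEmbedding_apply]
  constructor
  · rintro ⟨hj, h⟩
    rwa [getElem?_encSet_append_of_lt S T hj, getElem?_encSet_eq_some_true] at h
  · rintro ⟨i, hi, rfl⟩
    refine ⟨i.isLt, ?_⟩
    rw [getElem?_encSet_append_of_lt S T i.isLt, getElem?_encSet_eq_some_true]
    exact ⟨i, hi, rfl⟩

theorem onesIn_Ico_encSet_append : onesIn (Ico n (2 * n)) (encSet S ++ encSet T) = #T := by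
  rw [onesIn, ← card_map (Fin.valEmbedding.trans (addLeftEmbedding n))]
  congr 1
  ext j
  simp only [mem_filter, mem_Ico, mem_map, Function.Embedding.trans_apply, Fin.valEmbedding_apply,
    addLeftEmbedding_apply]
  constructor
  · rintro ⟨⟨hnj, -⟩, h⟩
    obtain ⟨j, rfl⟩ := Nat.exists_eq_add_of_le hnj
    rw [getElem?_encSet_append_add, getElem?_encSet_eq_some_true] at h
    obtain ⟨i, hi, rfl⟩ := h
    exact ⟨i, hi, rfl⟩
  · rintro ⟨i, hi, rfl⟩
    refine ⟨⟨by omega, by omega⟩, ?_⟩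
    rw [getElem?_encSet_append_add, getElem?_encSet_eq_some_true]
    exact ⟨i, hi, rfl⟩

end encSetAppend

/-- `inl false` and `inl true` count the ones in the first and in the second half of a word,
`inr i` the ones at positions `i` and `n + i`; `Detects` says when that count shows a word of
length `2n` to lie outside `⟨Disj^n_k⟩`. -/
abbrev DisjTest (n : ℕ) := Bool ⊕ Fin n

namespace DisjTest

variable {n : ℕ}

def positions : DisjTest n → Finset ℕ
  | .inl false => range n
  | .inl true => Ico n (2 * n)
  | .inr i => {(i : ℕ), n + i}

def cap (k : ℕ) : DisjTest n → ℕ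
  | .inl _ => k + 1
  | .inr _ => 2

def Detects (k : ℕ) : DisjTest n → ℕ → Prop
  | .inl _, ones => ones ≠ k
  | .inr _, ones => 2 ≤ ones

theorem lt_of_mem_positions {o : DisjTest n} {j : ℕ} (hj : j ∈ o.positions) :
    j < 2 * n + 1 := by
  rcases o with (_ | _) | i <;>
    simp only [positions, mem_range, mem_Ico, mem_insert, mem_singleton] at hj <;> omega

theorem detects_min_cap (k : ℕ) (o : DisjTest n) (ones : ℕ) :
    o.Detects k (min ones (o.cap k)) ↔ o.Detects k ones := by
  rcases o with b | i <;> simp only [Detects, cap] <;> omega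

def dfa (k : ℕ) (o : DisjTest n) : DFA Bool (Fin (2 * n + 1 + 1) × Fin (o.cap k + 1)) :=
  countDFA (2 * n + 1) (o.cap k) o.positions fun len ones => len = 2 * n → o.Detects k ones

theorem mem_dfa_accepts (k : ℕ) (o : DisjTest n) (w : List Bool) :
    w ∈ (o.dfa k).accepts ↔ (w.length = 2 * n → o.Detects k (onesIn o.positions w)) := by
  rw [dfa, mem_countDFA_accepts (fun _ => lt_of_mem_positions), detects_min_cap,
    show min w.length (2 * n + 1) = 2 * n ↔ w.length = 2 * n by omega]

theorem exists_detects_encSet_append (k : ℕ) (S T : Finset (Fin n)) :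
    (∃ o : DisjTest n, o.Detects k (onesIn o.positions (encSet S ++ encSet T))) ↔
      #S ≠ k ∨ #T ≠ k ∨ ¬Disjoint S T := by
  have hcol (i : Fin n) :
      2 ≤ onesIn {(i : ℕ), n + i} (encSet S ++ encSet T) ↔ i ∈ S ∧ i ∈ T := by
    rw [two_le_onesIn_pair_iff (by omega), getElem?_encSet_append_of_lt S T i.isLt,
      getElem?_encSet_append_add, getElem?_encSet_val_eq_some_true,
      getElem?_encSet_val_eq_some_true]
  simp only [Sum.exists, Bool.exists_bool, Detects, positions, onesIn_range_encSet_append,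
    onesIn_Ico_encSet_append, hcol, not_disjoint_iff, or_assoc]

theorem exists_mem_dfa_accepts_iff (k : ℕ) (w : List Bool) :
    (∃ o : DisjTest n, w ∈ (o.dfa k).accepts) ↔
      ¬∃ S T : Finset (Fin n),
        #S = k ∧ #T = k ∧ Disjoint S T ∧ w = encSet S ++ encSet T := by
  simp only [mem_dfa_accepts]
  by_cases hw : w.length = 2 * n
  · obtain ⟨S, hS⟩ := exists_encSet_eq (n := n) (w.take n) (by rw [List.length_take]; omega)
    obtain ⟨T, hT⟩ := exists_encSet_eq (n := n) (w.drop n) (by rw [List.length_drop]; omega)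
    obtain rfl : w = encSet S ++ encSet T := by rw [hS, hT, List.take_append_drop]
    simp only [hw, forall_const]
    rw [exists_detects_encSet_append]
    constructor
    · rintro h ⟨S', T', hS', hT', hST', heq⟩
      obtain ⟨rfl, rfl⟩ := encSet_append_inj heq
      tauto
    · intro h
      by_contra! h'
      exact h ⟨S, T, h'.1, h'.2.1, h'.2.2, rfl⟩
  · simp only [hw, IsEmpty.forall_iff, exists_const, true_iff]
    rintro ⟨S, T, -, -, -, rfl⟩
    exact hw (by rw [List.length_append, length_encSet, length_encSet, two_mul])

theorem card_sigma_states (k : ℕ) :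
    Fintype.card (Σ o : DisjTest n, Fin (2 * n + 1 + 1) × Fin (o.cap k + 1)) =
      2 * ((2 * n + 2) * (k + 2)) + n * ((2 * n + 2) * 3) := by
  rw [Fintype.card_sigma]
  simp only [Fintype.card_prod, Fintype.card_fin]
  rw [Fintype.sum_sum_type]
  simp [cap]

end DisjTest

/-- There is an NFA with `O(n²)` states recognizing the complement
language `{0,1}^* \ ⟨Disj^n_k⟩`. -/
theorem ufa_stmt13 : ∃ C : ℕ, ∀ n k : ℕ, k ≤ n →
    ∃ (σ : Type) (_ : Fintype σ) (M : NFA Bool σ),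
      Fintype.card σ ≤ C * (n ^ 2 + 1) ∧
      ∀ w : List Bool, w ∈ M.accepts ↔
        ¬ ∃ S T : Finset (Fin n), S.card = k ∧ T.card = k ∧ Disjoint S T ∧
            w = encSet S ++ encSet T := by
  refine ⟨20, fun n k hk => ⟨_, inferInstance, NFA.sigma fun o : DisjTest n => (o.dfa k).toNFA,
    ?_, fun w => ?_⟩⟩
  · rw [DisjTest.card_sigma_states]
    zify at hk ⊢
    nlinarith [sq_nonneg ((n : ℤ) - 1)]
  · simp only [NFA.mem_accepts_sigma, DFA.toNFA_correct]
    exact DisjTest.exists_mem_dfa_accepts_iff k w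
end
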